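/- Let G be a group, N a normal subgroup, and M a G-module (abelian group with G-action) such that the subgroup of N-fixed points of M is trivial. Then the restriction map from H^1(G, M) to H^1(N, M) is injective, and its image is contained in the G/N-invariant classes; moreover restriction gives an isomorphism from H^1(G, M) onto the G/N-invariant subgroup of H^1(N, M). -/

import Mathlib

/-!
Since `M^N = 0`, an element `m` is determined by the coboundary `n ↦ n • m - m` on `N`.
A cocycle vanishing on `N` takes values in `M^N` (evaluate it at `g * (g⁻¹ n g) = n * g`),
which gives injectivity. For any cocycle `f`, the conjugate of its restriction differs from
it by the coboundary of `f σ`, which gives invariance. Conversely, for an invariant class `c`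
the coboundary witness `f σ` of `σ • c - c` is unique, and uniqueness forces `σ ↦ f σ` to be
a cocycle extending `c`.
-/

/-- A 1-cocycle of a group `G` with values in a `G`-module `M`. -/
def IsOneCocycle {G M : Type*} [Group G] [AddCommGroup M] [DistribMulAction G M]
    (f : G → M) : Prop :=
  ∀ g h : G, f (g * h) = f g + g • f h

namespace IsOneCocycle

variable {G M : Type*} [Group G] [AddCommGroup M] [DistribMulAction G M] {f f' : G → M}

theorem map_one (hf : IsOneCocycle f) : f 1 = 0 := by
  simpa using hf 1 1

theorem smul_map_inv (hf : IsOneCocycle f) (g : G) : g • f g⁻¹ = -f g := by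
  have h := hf g g⁻¹
  rw [mul_inv_cancel, hf.map_one] at h
  exact eq_neg_of_add_eq_zero_right h.symm

theorem coboundary (m : M) : IsOneCocycle fun g : G => g • m - m := by
  intro g h
  simp only [mul_smul, smul_sub]
  abel

theorem sub (hf : IsOneCocycle f) (hf' : IsOneCocycle f') : IsOneCocycle (f - f') := by
  intro g h
  simp only [Pi.sub_apply, hf g h, hf' g h, smul_sub]
  abel

theorem smul_conj_sub (hf : IsOneCocycle f) (σ g : G) :
    σ • f (σ⁻¹ * g * σ) - f g = g • f σ - f σ := by
  rw [mul_assoc, hf, hf, smul_add, smul_inv_smul, hf.smul_map_inv]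
  abel

theorem smul_eq_of_forall_mem_map_eq_zero (hf : IsOneCocycle f) {N : Subgroup G} (hN : N.Normal)
    (hfN : ∀ n ∈ N, f n = 0) (g : G) {n : G} (hn : n ∈ N) : n • f g = f g := by
  have hconj : g⁻¹ * n * g ∈ N := by simpa using hN.conj_mem n hn g⁻¹
  calc n • f g = f (n * g) := by rw [hf, hfN n hn, zero_add]
    _ = f (g * (g⁻¹ * n * g)) := by group
    _ = f g := by rw [hf, hfN _ hconj, smul_zero, add_zero]

theorem eq_zero_of_forall_mem_map_eq_zero (hf : IsOneCocycle f) {N : Subgroup G} (hN : N.Normal)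
    (hfix : ∀ m : M, (∀ n ∈ N, n • m = m) → m = 0) (hfN : ∀ n ∈ N, f n = 0) : f = 0 :=
  funext fun g => hfix _ fun _ hn => hf.smul_eq_of_forall_mem_map_eq_zero hN hfN g hn

end IsOneCocycle

section Restriction

variable {G M : Type*} [Group G] [AddCommGroup M] [DistribMulAction G M] {N : Subgroup G}

theorem eq_of_forall_smul_sub_eq (hfix : ∀ m : M, (∀ n ∈ N, n • m = m) → m = 0) {m m' : M}
    (h : ∀ n ∈ N, n • m - m = n • m' - m') : m = m' :=
  sub_eq_zero.mp <| hfix _ fun n hn => by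
    rw [smul_sub, sub_eq_sub_iff_sub_eq_sub]
    exact h n hn

def Subgroup.Normal.rightConj (hN : N.Normal) (σ : G) (n : N) : N :=
  ⟨σ⁻¹ * n * σ, by simpa using hN.conj_mem n n.2 σ⁻¹⟩

theorem Subgroup.Normal.rightConj_mul (hN : N.Normal) (σ τ : G) (n : N) :
    hN.rightConj (σ * τ) n = hN.rightConj τ (hN.rightConj σ n) :=
  Subtype.ext <| by simp only [Subgroup.Normal.rightConj]; group

variable (hN : N.Normal) {c : N → M} {f : G → M}

theorem isOneCocycle_of_forall_smul_rightConj_sub_eq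
    (hfix : ∀ m : M, (∀ n ∈ N, n • m = m) → m = 0)
    (hf : ∀ σ : G, ∀ n : N, σ • c (hN.rightConj σ n) - c n = (n : G) • f σ - f σ) :
    IsOneCocycle f := by
  intro σ τ
  refine (eq_of_forall_smul_sub_eq hfix fun n hn => ?_).symm
  set n' := hN.rightConj σ ⟨n, hn⟩
  have hτ : τ • c (hN.rightConj τ n') = c n' + ((n' : G) • f τ - f τ) := by
    rw [← hf τ n']; abel
  have hσ : σ • c n' = c ⟨n, hn⟩ + (n • f σ - f σ) := by
    rw [← hf σ ⟨n, hn⟩]; abel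
  have hcomm : σ • (n' : G) • f τ = n • σ • f τ := by
    rw [smul_smul, smul_smul]
    congr 1
    simp only [n', Subgroup.Normal.rightConj]
    group
  calc n • (f σ + σ • f τ) - (f σ + σ • f τ)
      = σ • c n' + σ • (n' : G) • f τ - σ • f τ - c ⟨n, hn⟩ := by
        rw [hσ, hcomm, smul_add]; abel
    _ = (σ * τ) • c (hN.rightConj (σ * τ) ⟨n, hn⟩) - c ⟨n, hn⟩ := by
        rw [mul_smul, hN.rightConj_mul, hτ, smul_add, smul_sub]; abel
    _ = n • f (σ * τ) - f (σ * τ) := hf _ _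

theorem eq_of_forall_smul_rightConj_sub_eq
    (hfix : ∀ m : M, (∀ n ∈ N, n • m = m) → m = 0)
    (hc : ∀ n n' : N, c (n * n') = c n + (n : G) • c n')
    (hf : ∀ σ : G, ∀ n : N, σ • c (hN.rightConj σ n) - c n = (n : G) • f σ - f σ) (n₀ : N) :
    f n₀ = c n₀ := by
  -- `N` acts on `M` through `G`, so `hc` is the cocycle condition over `N` itself.
  have hcN : IsOneCocycle c := hc
  refine eq_of_forall_smul_sub_eq hfix fun n hn => ?_
  rw [← hf n₀ ⟨n, hn⟩]
  exact hcN.smul_conj_sub n₀ ⟨n, hn⟩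

end Restriction

/-- if `M^N = 0` then restriction `H¹(G,M) → H¹(N,M)` is injective, lands in
the `G/N`-invariant classes (invariance under conjugation by every `σ ∈ G`), and is
surjective onto the `G/N`-invariant classes. -/
theorem restriction_H1_iso_of_fixedPoints_trivial
    {G M : Type*} [Group G] [AddCommGroup M] [DistribMulAction G M]
    (N : Subgroup G) (hN : N.Normal)
    (hfix : ∀ m : M, (∀ n ∈ N, n • m = m) → m = 0) :
    -- injectivity: two cocycles on `G` whose restrictions to `N` are cohomologous over `N`
    -- are cohomologous over `G`
    (∀ f f' : G → M, IsOneCocycle f → IsOneCocycle f' →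
      (∃ m : M, ∀ n ∈ N, f n - f' n = n • m - m) →
      (∃ m : M, ∀ g : G, f g - f' g = g • m - m)) ∧
    -- the image lies in the `G/N`-invariants: for every `σ ∈ G` the conjugated restricted
    -- cocycle is cohomologous (over `N`) to the restricted cocycle
    (∀ f : G → M, IsOneCocycle f → ∀ σ : G,
      ∃ m : M, ∀ n ∈ N, σ • f (σ⁻¹ * n * σ) - f n = n • m - m) ∧
    -- surjectivity onto the `G/N`-invariants: every `G/N`-invariant class on `N`
    -- extends (up to coboundary) to a cocycle on `G`
    (∀ c : N → M, (∀ n n' : N, c (n * n') = c n + (n : G) • c n') →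
      (∀ σ : G, ∃ m : M, ∀ n : N,
        σ • c ⟨σ⁻¹ * n * σ, by simpa using hN.conj_mem n n.2 σ⁻¹⟩ - c n = (n : G) • m - m) →
      ∃ f : G → M, IsOneCocycle f ∧ ∃ m : M, ∀ n : N, f n - c n = (n : G) • m - m) := by
  refine ⟨?injective, fun f hf σ => ⟨f σ, fun n _ => hf.smul_conj_sub σ n⟩, ?surjective⟩
  case injective =>
    rintro f f' hf hf' ⟨m, hm⟩
    have hzero := ((hf.sub hf').sub (IsOneCocycle.coboundary m)).eq_zero_of_forall_mem_map_eq_zero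
      hN hfix fun n hn => sub_eq_zero.mpr (hm n hn)
    exact ⟨m, fun g => sub_eq_zero.mp (congrFun hzero g)⟩
  case surjective =>
    intro c hc hcinv
    choose f hf using hcinv
    refine ⟨f, isOneCocycle_of_forall_smul_rightConj_sub_eq hN hfix hf, 0, fun n => ?_⟩
    rw [eq_of_forall_smul_rightConj_sub_eq hN hfix hc hf n]
    simp
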